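/- arXiv:0704.3148 — 2 statements merged into one kernel-verified Lean document; each statement's English description precedes it below -/
import Mathlib

section
/- Let (M,d) be a metric space with completion \bar M_C, let I=(a,b)⊆ℝ be a nonempty open interval, let x₀∈\bar M_C and Ω∈(a,b), and set P={(t',x')∈I×M : t'<Ω−d(x',x₀)}. Then the set of common chronological upper bounds of P is {(t,x)∈I×M : t≥Ω+d(x,x₀)}, and the common future is ↑P={(t',x')∈I×M : t'>Ω+d(x',x₀)}. Dually, for F={(t',x')∈I×M : t'>Ω+d(x',x₀)} one has ↓F={(t',x')∈I×M : t'<Ω−d(x',x₀)}=P. -/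
open Set
open scoped ENNReal NNReal

noncomputable section

/-- The product spacetime `V = I × M`, `I = (a,b) ⊆ ℝ`, as a subset of `ℝ × M`. -/
def Spacetime {M : Type*} [MetricSpace M] (a b : EReal) : Set (ℝ × M) :=
  {p | a < (p.1 : EReal) ∧ (p.1 : EReal) < b}

/-- The chronology relation on the product spacetime: `(t₀,x₀) ≪ (t₁,x₁)` iff both points
lie in `V = (a,b) × M` and `t₀ < t₁ - d(x₀,x₁)`. -/
def Chron {M : Type*} [MetricSpace M] (a b : EReal) (p q : ℝ × M) : Prop :=
  p ∈ Spacetime a b ∧ q ∈ Spacetime a b ∧ p.1 < q.1 - dist p.2 q.2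

/-- The chronological past `I⁻(p)`. -/
def IminusPt {M : Type*} [MetricSpace M] (a b : EReal) (p : ℝ × M) : Set (ℝ × M) :=
  {q | Chron a b q p}

/-- The chronological future `I⁺(p)`. -/
def IplusPt {M : Type*} [MetricSpace M] (a b : EReal) (p : ℝ × M) : Set (ℝ × M) :=
  {q | Chron a b p q}

/-- `I⁻[S]`. -/
def IminusSet {M : Type*} [MetricSpace M] (a b : EReal) (S : Set (ℝ × M)) : Set (ℝ × M) :=
  {q | ∃ s ∈ S, Chron a b q s}

/-- `I⁺[S]`. -/
def IplusSet {M : Type*} [MetricSpace M] (a b : EReal) (S : Set (ℝ × M)) : Set (ℝ × M) :=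
  {q | ∃ s ∈ S, Chron a b s q}

/-- A past set: `P = I⁻[P]`. -/
def IsPastSet {M : Type*} [MetricSpace M] (a b : EReal) (P : Set (ℝ × M)) : Prop :=
  IminusSet a b P = P

/-- A future set: `F = I⁺[F]`. -/
def IsFutureSet {M : Type*} [MetricSpace M] (a b : EReal) (F : Set (ℝ × M)) : Prop :=
  IplusSet a b F = F

/-- An indecomposable past set (IP). -/
def IsIP {M : Type*} [MetricSpace M] (a b : EReal) (P : Set (ℝ × M)) : Prop :=
  P.Nonempty ∧ IsPastSet a b P ∧
    ∀ P₁ P₂ : Set (ℝ × M), IsPastSet a b P₁ → IsPastSet a b P₂ → P = P₁ ∪ P₂ →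
      P₁ = P ∨ P₂ = P

/-- An indecomposable future set (IF). -/
def IsIF {M : Type*} [MetricSpace M] (a b : EReal) (F : Set (ℝ × M)) : Prop :=
  F.Nonempty ∧ IsFutureSet a b F ∧
    ∀ F₁ F₂ : Set (ℝ × M), IsFutureSet a b F₁ → IsFutureSet a b F₂ → F = F₁ ∪ F₂ →
      F₁ = F ∨ F₂ = F

/-- A terminal indecomposable past set (TIP): an IP that is not the past of any point of `V`. -/
def IsTIP {M : Type*} [MetricSpace M] (a b : EReal) (P : Set (ℝ × M)) : Prop :=
  IsIP a b P ∧ ∀ p ∈ Spacetime (M := M) a b, P ≠ IminusPt a b p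

/-- A terminal indecomposable future set (TIF). -/
def IsTIF {M : Type*} [MetricSpace M] (a b : EReal) (F : Set (ℝ × M)) : Prop :=
  IsIF a b F ∧ ∀ p ∈ Spacetime (M := M) a b, F ≠ IplusPt a b p

/-- The common future `↑P = I⁺[{q ∈ V : p ≪ q for all p ∈ P}]`. -/
def CommonFuture {M : Type*} [MetricSpace M] (a b : EReal) (P : Set (ℝ × M)) : Set (ℝ × M) :=
  IplusSet a b {q | q ∈ Spacetime a b ∧ ∀ p ∈ P, Chron a b p q}

/-- The common past `↓F = I⁻[{q ∈ V : q ≪ f for all f ∈ F}]`. -/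
def CommonPast {M : Type*} [MetricSpace M] (a b : EReal) (F : Set (ℝ × M)) : Set (ℝ × M) :=
  IminusSet a b {q | q ∈ Spacetime a b ∧ ∀ f ∈ F, Chron a b q f}

/-- `P ∼ₛ F`: `P` is a maximal IP among those contained in `↓F`, and `F` is a maximal IF
among those contained in `↑P`. -/
def SRel {M : Type*} [MetricSpace M] (a b : EReal) (P F : Set (ℝ × M)) : Prop :=
  IsIP a b P ∧ IsIF a b F ∧ P ⊆ CommonPast a b F ∧ F ⊆ CommonFuture a b P ∧
    (∀ P' : Set (ℝ × M), IsIP a b P' → P' ⊆ CommonPast a b F → P ⊆ P' → P' = P) ∧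
    (∀ F' : Set (ℝ × M), IsIF a b F' → F' ⊆ CommonFuture a b P → F ⊆ F' → F' = F)

/-- The chronological past `I⁻[γ]` of the curve `γ(t) = (t, c(t))`, `t ∈ D`. -/
def PastOfCurve {M : Type*} [MetricSpace M] (a b : EReal) (c : ℝ → M) (D : Set ℝ) :
    Set (ℝ × M) :=
  {q | ∃ t ∈ D, Chron a b q (t, c t)}

/-- The chronological future `I⁺[γ]` of the curve `γ(t) = (t, c(t))`, `t ∈ D`. -/
def FutureOfCurve {M : Type*} [MetricSpace M] (a b : EReal) (c : ℝ → M) (D : Set ℝ) :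
    Set (ℝ × M) :=
  {q | ∃ t ∈ D, Chron a b (t, c t) q}

/-- The Busemann function `b_c(x) = sup_{t ∈ D} (t - d(x, c(t))) ∈ ℝ ∪ {±∞}`. -/
def Busemann {M : Type*} [MetricSpace M] (c : ℝ → M) (D : Set ℝ) (x : M) : EReal :=
  sSup {y : EReal | ∃ t ∈ D, y = ((t - dist x (c t) : ℝ) : EReal)}

/-!
The sets `P` and `F` are the chronological past and future of the ideal point `(Ω, x₀)`.
The triangle inequality through `x₀` shows that everything in the closed future cone of
`(Ω, x₀)` lies chronologically above everything in its open past cone, and dually. Conversely,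
since `M` is dense in its completion, `P` and `F` contain points `(t, x)` with `t → Ω` and
`x → x₀`, and being chronologically related to all of them forces a point into the closed cones.
-/

open Topology UniformSpace

section

variable {M : Type*} [MetricSpace M]

def pastCone (a b : EReal) (x₀ : Completion M) (Ω : ℝ) : Set (ℝ × M) :=
  {p | p ∈ Spacetime a b ∧ p.1 < Ω - dist (p.2 : Completion M) x₀}

def futureCone (a b : EReal) (x₀ : Completion M) (Ω : ℝ) : Set (ℝ × M) :=
  {p | p ∈ Spacetime a b ∧ Ω + dist (p.2 : Completion M) x₀ < p.1}

def closedPastCone (a b : EReal) (x₀ : Completion M) (Ω : ℝ) : Set (ℝ × M) :=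
  {p | p ∈ Spacetime a b ∧ p.1 ≤ Ω - dist (p.2 : Completion M) x₀}

def closedFutureCone (a b : EReal) (x₀ : Completion M) (Ω : ℝ) : Set (ℝ × M) :=
  {p | p ∈ Spacetime a b ∧ Ω + dist (p.2 : Completion M) x₀ ≤ p.1}

def chronUpperBounds (a b : EReal) (S : Set (ℝ × M)) : Set (ℝ × M) :=
  {q | q ∈ Spacetime a b ∧ ∀ p ∈ S, Chron a b p q}

def chronLowerBounds (a b : EReal) (S : Set (ℝ × M)) : Set (ℝ × M) :=
  {q | q ∈ Spacetime a b ∧ ∀ f ∈ S, Chron a b q f}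

section Chron

variable {a b : EReal} {p q : ℝ × M}

theorem chron_of_add_dist_lt_sub_dist (z : Completion M) (hp : p ∈ Spacetime a b)
    (hq : q ∈ Spacetime a b)
    (h : p.1 + dist (p.2 : Completion M) z < q.1 - dist (q.2 : Completion M) z) :
    Chron a b p q := by
  have : dist p.2 q.2 ≤ dist (p.2 : Completion M) z + dist (q.2 : Completion M) z :=
    (Completion.dist_eq p.2 q.2).symm.trans_le (dist_triangle_right _ _ z)
  exact ⟨hp, hq, by linarith⟩

theorem abs_dist_sub_dist_lt_of_chron (z : Completion M) (h : Chron a b p q) :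
    |dist (p.2 : Completion M) z - dist (q.2 : Completion M) z| < q.1 - p.1 :=
  calc |dist (p.2 : Completion M) z - dist (q.2 : Completion M) z|
      ≤ dist (p.2 : Completion M) q.2 := abs_dist_sub_le _ _ _
    _ = dist p.2 q.2 := Completion.dist_eq _ _
    _ < q.1 - p.1 := by linarith [h.2.2]

end Chron

section Cones

variable {a b : EReal} {Ω : ℝ} (x₀ : Completion M)

theorem exists_dist_coe_lt_forall_mem_spacetime (ha : a < Ω) (hb : (Ω : EReal) < b) {ε : ℝ}
    (hε : 0 < ε) : ∃ x : M, ∃ η, dist (x : Completion M) x₀ < η ∧ 2 * η ≤ ε ∧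
      ∀ t, |t - Ω| < 2 * η → (t, x) ∈ Spacetime a b := by
  have hV : ∀ᶠ t : ℝ in 𝓝 Ω, (t : EReal) ∈ Ioo a b :=
    continuous_coe_real_ereal.continuousAt.preimage_mem_nhds (isOpen_Ioo.mem_nhds ⟨ha, hb⟩)
  obtain ⟨δ, hδ, hδV⟩ := Metric.eventually_nhds_iff.1 hV
  have hη : 0 < min ε δ / 2 := by positivity
  obtain ⟨x, hx⟩ := Metric.denseRange_iff.1 Completion.denseRange_coe x₀ _ hη
  refine ⟨x, min ε δ / 2, by rwa [dist_comm], by linarith [min_le_left ε δ], fun t ht => ?_⟩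
  exact hδV (by rw [Real.dist_eq]; linarith [min_le_right ε δ])

theorem exists_mem_pastCone_near (ha : a < Ω) (hb : (Ω : EReal) < b) {ε : ℝ} (hε : 0 < ε) :
    ∃ p ∈ pastCone a b x₀ Ω, Ω - ε < p.1 ∧ dist (p.2 : Completion M) x₀ < ε := by
  obtain ⟨x, η, hx, hηε, hV⟩ := exists_dist_coe_lt_forall_mem_spacetime x₀ ha hb hε
  have := dist_nonneg (x := (x : Completion M)) (y := x₀)
  refine ⟨(Ω - η - dist (x : Completion M) x₀, x), ⟨hV _ ?_, ?_⟩, ?_, ?_⟩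
  · rw [abs_sub_lt_iff]; constructor <;> linarith
  all_goals dsimp only; linarith

theorem exists_mem_futureCone_near (ha : a < Ω) (hb : (Ω : EReal) < b) {ε : ℝ} (hε : 0 < ε) :
    ∃ f ∈ futureCone a b x₀ Ω, f.1 < Ω + ε ∧ dist (f.2 : Completion M) x₀ < ε := by
  obtain ⟨x, η, hx, hηε, hV⟩ := exists_dist_coe_lt_forall_mem_spacetime x₀ ha hb hε
  have := dist_nonneg (x := (x : Completion M)) (y := x₀)
  refine ⟨(Ω + η + dist (x : Completion M) x₀, x), ⟨hV _ ?_, ?_⟩, ?_, ?_⟩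
  · rw [abs_sub_lt_iff]; constructor <;> linarith
  all_goals dsimp only; linarith

theorem chronUpperBounds_pastCone (ha : a < Ω) (hb : (Ω : EReal) < b) :
    chronUpperBounds a b (pastCone a b x₀ Ω) = closedFutureCone a b x₀ Ω := by
  ext q
  refine ⟨fun ⟨hq, hbound⟩ => ⟨hq, le_of_forall_pos_lt_add fun ε hε => ?_⟩,
    fun ⟨hq, hle⟩ => ⟨hq, fun p ⟨hp, hlt⟩ => chron_of_add_dist_lt_sub_dist x₀ hp hq ?_⟩⟩
  · obtain ⟨p, hpP, hpΩ, hpx₀⟩ := exists_mem_pastCone_near x₀ ha hb (half_pos hε)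
    have := abs_sub_lt_iff.1 (abs_dist_sub_dist_lt_of_chron x₀ (hbound p hpP))
    linarith
  · linarith

theorem chronLowerBounds_futureCone (ha : a < Ω) (hb : (Ω : EReal) < b) :
    chronLowerBounds a b (futureCone a b x₀ Ω) = closedPastCone a b x₀ Ω := by
  ext q
  refine ⟨fun ⟨hq, hbound⟩ => ⟨hq, le_of_forall_pos_lt_add fun ε hε => ?_⟩,
    fun ⟨hq, hle⟩ => ⟨hq, fun f ⟨hf, hlt⟩ => chron_of_add_dist_lt_sub_dist x₀ hq hf ?_⟩⟩
  · obtain ⟨f, hfF, hfΩ, hfx₀⟩ := exists_mem_futureCone_near x₀ ha hb (half_pos hε)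
    have := abs_sub_lt_iff.1 (abs_dist_sub_dist_lt_of_chron x₀ (hbound f hfF))
    linarith
  · linarith

theorem iplusSet_closedFutureCone (ha : a < Ω) (hb : (Ω : EReal) < b) :
    IplusSet a b (closedFutureCone a b x₀ Ω) = futureCone a b x₀ Ω := by
  ext q
  constructor
  · rintro ⟨s, ⟨-, hs⟩, hsq⟩
    have := abs_sub_lt_iff.1 (abs_dist_sub_dist_lt_of_chron x₀ hsq)
    exact ⟨hsq.2.1, by linarith⟩
  · rintro ⟨hq, hlt⟩
    obtain ⟨f, ⟨hf, hfF⟩, hfΩ, hfx₀⟩ :=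
      exists_mem_futureCone_near x₀ ha hb (ε := (q.1 - Ω - dist (q.2 : Completion M) x₀) / 2)
        (by linarith)
    exact ⟨f, ⟨hf, hfF.le⟩, chron_of_add_dist_lt_sub_dist x₀ hf hq (by linarith)⟩

theorem iminusSet_closedPastCone (ha : a < Ω) (hb : (Ω : EReal) < b) :
    IminusSet a b (closedPastCone a b x₀ Ω) = pastCone a b x₀ Ω := by
  ext q
  constructor
  · rintro ⟨s, ⟨-, hs⟩, hqs⟩
    have := abs_sub_lt_iff.1 (abs_dist_sub_dist_lt_of_chron x₀ hqs)
    exact ⟨hqs.1, by linarith⟩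
  · rintro ⟨hq, hlt⟩
    obtain ⟨p, ⟨hp, hpP⟩, hpΩ, hpx₀⟩ :=
      exists_mem_pastCone_near x₀ ha hb (ε := (Ω - dist (q.2 : Completion M) x₀ - q.1) / 2)
        (by linarith)
    exact ⟨p, ⟨hp, hpP.le⟩, chron_of_add_dist_lt_sub_dist x₀ hq hp (by linarith)⟩

end Cones

end

/-- For `x₀` in the completion of `M` and `Ω ∈ (a,b)`, with
`P = {(t',x') ∈ I×M : t' < Ω - d(x',x₀)}`: the set of common chronological upper bounds of
`P` is `{(t,x) ∈ I×M : t ≥ Ω + d(x,x₀)}`, and `↑P = {(t',x') ∈ I×M : t' > Ω + d(x',x₀)}`.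
Dually, for `F = {(t',x') ∈ I×M : t' > Ω + d(x',x₀)}` one has `↓F = P`. -/
theorem stmt2 {M : Type*} [MetricSpace M] (a b : EReal)
    (x₀ : UniformSpace.Completion M) (Ω : ℝ) (ha : a < (Ω : EReal)) (hb : (Ω : EReal) < b)
    (P F : Set (ℝ × M))
    (hP : P = {p : ℝ × M | p ∈ Spacetime a b ∧
      p.1 < Ω - dist (p.2 : UniformSpace.Completion M) x₀})
    (hF : F = {p : ℝ × M | p ∈ Spacetime a b ∧
      Ω + dist (p.2 : UniformSpace.Completion M) x₀ < p.1}) :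
    {q : ℝ × M | q ∈ Spacetime a b ∧ ∀ p ∈ P, Chron a b p q} =
      {q : ℝ × M | q ∈ Spacetime a b ∧
        Ω + dist (q.2 : UniformSpace.Completion M) x₀ ≤ q.1} ∧
    CommonFuture a b P = F ∧
    CommonPast a b F = P := by
  change P = pastCone a b x₀ Ω at hP
  change F = futureCone a b x₀ Ω at hF
  subst hP hF
  have hupper := chronUpperBounds_pastCone x₀ ha hb
  refine ⟨hupper, ?_, ?_⟩
  · change IplusSet a b (chronUpperBounds a b _) = _
    rw [hupper, iplusSet_closedFutureCone x₀ ha hb]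
  · change IminusSet a b (chronLowerBounds a b _) = _
    rw [chronLowerBounds_futureCone x₀ ha hb, iminusSet_closedPastCone x₀ ha hb]
end
end

section
/- Let (M,d) be a metric space, I=(a,b)⊆ℝ a nonempty open interval, and γ(t)=(t,c(t)), t∈[w,Ω)⊆I, a future-directed timelike curve in V=I×M. Then P=I⁻[γ] is an indecomposable past set: P is a nonempty past set, and whenever P=P₁∪P₂ with P₁,P₂ past sets, then P₁=P or P₂=P. In particular (taking c constant), for every p∈V the set I⁻(p) is an IP. -/
open Set
open scoped ENNReal NNReal

noncomputable section

/-!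
`I⁻[S]` is an indecomposable past set as soon as `S` is nonempty and directed for `≪`: if
`I⁻[S] = P₁ ∪ P₂` with `x ∉ P₁` and `y ∉ P₂`, a point `s ∈ S` in the common future of `x` and `y`
lies in `P₁` or in `P₂`, and then so does `x` or `y`. The points of a timelike curve form such a
set, since `d(c t₁, c t₂) ≤ K (t₂ - t₁) < t₂ - t₁` makes `γ(t₁) ≪ γ(t₂)` for `t₁ < t₂`, and
`[w, Ω)` has no largest element. The past of a point `p = (t_p, x)` is the past of the constant
curve `t ↦ (t, x)` on `[w, t_p)`, for any `w ∈ I` below `t_p`.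
-/

section Chronology

variable {M : Type*} [MetricSpace M] {a b : EReal}

theorem Chron.trans {p q r : ℝ × M} (hpq : Chron a b p q) (hqr : Chron a b q r) :
    Chron a b p r := by
  refine ⟨hpq.1, hqr.2.1, ?_⟩
  linarith [dist_triangle p.2 q.2 r.2, hpq.2.2, hqr.2.2]

theorem Chron.exists_between {p q : ℝ × M} (h : Chron a b p q) :
    ∃ u, Chron a b p u ∧ Chron a b u q := by
  obtain ⟨t, hpt, htq⟩ := _root_.exists_between h.2.2
  have hdist : 0 ≤ dist p.2 q.2 := dist_nonneg
  have htV : (t, p.2) ∈ Spacetime (M := M) a b :=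
    ⟨h.1.1.trans (EReal.coe_lt_coe_iff.mpr hpt),
      (EReal.coe_lt_coe_iff.mpr (by linarith : t < q.1)).trans h.2.1.2⟩
  exact ⟨(t, p.2), ⟨h.1, htV, by simpa using hpt⟩, ⟨htV, h.2.1, htq⟩⟩

theorem isPastSet_iminusSet (S : Set (ℝ × M)) : IsPastSet a b (IminusSet a b S) := by
  refine Subset.antisymm ?_ ?_
  · rintro q ⟨p, ⟨s, hs, hps⟩, hqp⟩
    exact ⟨s, hs, hqp.trans hps⟩
  · rintro q ⟨s, hs, hqs⟩
    obtain ⟨u, hqu, hus⟩ := hqs.exists_between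
    exact ⟨u, ⟨s, hs, hus⟩, hqu⟩

theorem isIP_of_directed {P : Set (ℝ × M)} (hP : IsPastSet a b P) (hne : P.Nonempty)
    (hdir : ∀ x ∈ P, ∀ y ∈ P, ∃ z ∈ P, Chron a b x z ∧ Chron a b y z) : IsIP a b P := by
  refine ⟨hne, hP, fun P₁ P₂ hP₁ hP₂ hunion => ?_⟩
  by_contra! hproper
  obtain ⟨x, hxP, hx₁⟩ :=
    exists_of_ssubset (hproper.1.ssubset_of_subset (hunion ▸ subset_union_left))
  obtain ⟨y, hyP, hy₂⟩ :=
    exists_of_ssubset (hproper.2.ssubset_of_subset (hunion ▸ subset_union_right))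
  obtain ⟨z, hzP, hxz, hyz⟩ := hdir x hxP y hyP
  rcases hunion ▸ hzP with hz₁ | hz₂
  · exact hx₁ (hP₁ ▸ ⟨z, hz₁, hxz⟩)
  · exact hy₂ (hP₂ ▸ ⟨z, hz₂, hyz⟩)

theorem isIP_iminusSet_of_directed {S : Set (ℝ × M)} (hS : S.Nonempty)
    (hdir : ∀ s₁ ∈ S, ∀ s₂ ∈ S, ∃ s ∈ S, Chron a b s₁ s ∧ Chron a b s₂ s) :
    IsIP a b (IminusSet a b S) := by
  have hsub : S ⊆ IminusSet a b S := fun s hs =>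
    let ⟨s', hs', hss', _⟩ := hdir s hs s hs
    ⟨s', hs', hss'⟩
  refine isIP_of_directed (isPastSet_iminusSet S) (hS.mono hsub) ?_
  rintro x ⟨s₁, hs₁, hx⟩ y ⟨s₂, hs₂, hy⟩
  obtain ⟨s, hs, hs₁s, hs₂s⟩ := hdir s₁ hs₁ s₂ hs₂
  exact ⟨s, hsub hs, hx.trans hs₁s, hy.trans hs₂s⟩

end Chronology

section TimelikeCurve

variable {M : Type*} [MetricSpace M] {a b : EReal} {c : ℝ → M}

theorem pastOfCurve_eq_iminusSet_image (D : Set ℝ) :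
    PastOfCurve a b c D = IminusSet a b ((fun t => (t, c t)) '' D) := by
  ext q
  simp [PastOfCurve, IminusSet]

theorem chron_of_lipschitzOnWith {D : Set ℝ} {K : ℝ≥0} (hK : (K : ℝ) < 1)
    (hc : LipschitzOnWith K c D) (hV : ∀ t ∈ D, (t, c t) ∈ Spacetime (M := M) a b)
    {t₁ t₂ : ℝ} (ht₁ : t₁ ∈ D) (ht₂ : t₂ ∈ D) (hlt : t₁ < t₂) :
    Chron a b (t₁, c t₁) (t₂, c t₂) := by
  refine ⟨hV t₁ ht₁, hV t₂ ht₂, ?_⟩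
  have hdist : dist (c t₁) (c t₂) < t₂ - t₁ :=
    calc dist (c t₁) (c t₂) ≤ K * dist t₁ t₂ := hc.dist_le_mul t₁ ht₁ t₂ ht₂
      _ = K * (t₂ - t₁) := by rw [Real.dist_eq, abs_sub_comm, abs_of_pos (sub_pos.mpr hlt)]
      _ < t₂ - t₁ := mul_lt_of_lt_one_left (sub_pos.mpr hlt) hK
  simp only
  linarith

theorem isIP_pastOfCurve {w : ℝ} {Ω : EReal} (hw : a < (w : EReal)) (hΩ : Ω ≤ b)
    (hwΩ : (w : EReal) < Ω) {K : ℝ≥0} (hK : (K : ℝ) < 1)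
    (hc : LipschitzOnWith K c {t : ℝ | w ≤ t ∧ (t : EReal) < Ω}) :
    IsIP a b (PastOfCurve a b c {t : ℝ | w ≤ t ∧ (t : EReal) < Ω}) := by
  set D := {t : ℝ | w ≤ t ∧ (t : EReal) < Ω}
  have hV : ∀ t ∈ D, (t, c t) ∈ Spacetime (M := M) a b := fun t ht =>
    ⟨hw.trans_le (EReal.coe_le_coe_iff.mpr ht.1), ht.2.trans_le hΩ⟩
  rw [pastOfCurve_eq_iminusSet_image]
  refine isIP_iminusSet_of_directed ⟨_, w, ⟨le_rfl, hwΩ⟩, rfl⟩ ?_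
  rintro _ ⟨t₁, ht₁, rfl⟩ _ ⟨t₂, ht₂, rfl⟩
  have hmax : ((max t₁ t₂ : ℝ) : EReal) < Ω := by
    rw [Monotone.map_max EReal.coe_strictMono.monotone]
    exact max_lt ht₁.2 ht₂.2
  obtain ⟨s, hmax_s, hsΩ⟩ := EReal.lt_iff_exists_real_btwn.mp hmax
  have hlt : max t₁ t₂ < s := EReal.coe_lt_coe_iff.mp hmax_s
  have hs : s ∈ D := ⟨ht₁.1.trans ((le_max_left _ _).trans hlt.le), hsΩ⟩
  exact ⟨_, ⟨s, hs, rfl⟩,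
    chron_of_lipschitzOnWith hK hc hV ht₁ hs ((le_max_left _ _).trans_lt hlt),
    chron_of_lipschitzOnWith hK hc hV ht₂ hs ((le_max_right _ _).trans_lt hlt)⟩

theorem iminusPt_eq_pastOfCurve_const {p : ℝ × M} (hp : p ∈ Spacetime (M := M) a b) {w : ℝ}
    (hwp : w < p.1) :
    IminusPt a b p = PastOfCurve a b (fun _ => p.2) {t : ℝ | w ≤ t ∧ (t : EReal) < p.1} := by
  ext q
  constructor
  · intro hqp
    have hdist : 0 ≤ dist q.2 p.2 := dist_nonneg
    obtain ⟨t, hmax, htp⟩ :=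
      exists_between (max_lt hwp (by linarith [hqp.2.2] : q.1 + dist q.2 p.2 < p.1))
    have hqt : q.1 + dist q.2 p.2 < t := (le_max_right _ _).trans_lt hmax
    have htV : (t, p.2) ∈ Spacetime (M := M) a b :=
      ⟨hqp.1.1.trans (EReal.coe_lt_coe_iff.mpr (by linarith)),
        (EReal.coe_lt_coe_iff.mpr htp).trans hp.2⟩
    exact ⟨t, ⟨(le_max_left _ _).trans hmax.le, EReal.coe_lt_coe_iff.mpr htp⟩, hqp.1, htV,
      by simp only; linarith⟩
  · rintro ⟨t, ht, hqt⟩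
    exact hqt.trans ⟨hqt.2.1, hp, by simpa using EReal.coe_lt_coe_iff.mp ht.2⟩

end TimelikeCurve

theorem stmt6_general {M : Type*} [MetricSpace M] (a b : EReal)
    (c : ℝ → M) (w : ℝ) (Ω : EReal)
    (hw : a < (w : EReal)) (hΩ : Ω ≤ b) (hwΩ : (w : EReal) < Ω)
    (K : ℝ≥0) (hK : (K : ℝ) < 1)
    (hc : LipschitzOnWith K c {t : ℝ | w ≤ t ∧ (t : EReal) < Ω}) :
    IsIP a b (PastOfCurve a b c {t : ℝ | w ≤ t ∧ (t : EReal) < Ω}) ∧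
    ∀ p ∈ Spacetime (M := M) a b, IsIP a b (IminusPt a b p) := by
  refine ⟨isIP_pastOfCurve hw hΩ hwΩ hK hc, fun p hp => ?_⟩
  obtain ⟨w', haw', hw'p⟩ := EReal.lt_iff_exists_real_btwn.mp hp.1
  rw [iminusPt_eq_pastOfCurve_const hp (EReal.coe_lt_coe_iff.mp hw'p)]
  exact isIP_pastOfCurve haw' hp.2.le hw'p (K := 0) zero_lt_one
    (LipschitzWith.const _).lipschitzOnWith

/-- For a future-directed timelike curve `γ(t) = (t, c t)`, `t ∈ [w,Ω) ⊆ I`,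
the set `P = I⁻[γ]` is an indecomposable past set; in particular (taking `c` constant),
`I⁻(p)` is an IP for every `p ∈ V`. -/
theorem stmt6 {M : Type*} [MetricSpace M] (a b : EReal) (hab : a < b)
    (c : ℝ → M) (w : ℝ) (Ω : EReal)
    (hw : a < (w : EReal)) (hΩ : Ω ≤ b) (hwΩ : (w : EReal) < Ω)
    (K : ℝ≥0) (hK : (K : ℝ) < 1)
    (hc : LipschitzOnWith K c {t : ℝ | w ≤ t ∧ (t : EReal) < Ω}) :
    IsIP a b (PastOfCurve a b c {t : ℝ | w ≤ t ∧ (t : EReal) < Ω}) ∧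
    ∀ p ∈ Spacetime (M := M) a b, IsIP a b (IminusPt a b p) :=
  stmt6_general a b c w Ω hw hΩ hwΩ K hK hc
end
end
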